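/- Let S : [0,1] → ℝ be a continuous function. For integers K, R ≥ 1 and an R×R complex matrix M, define Ψ_{K,R}(M) = ∫_0^1 S(ν) ( a_R(ν)^H M a_R(ν) ) d_K(ν) d_K(ν)^H dν. Then: (1) for every R×R matrix M, ‖Ψ_{K,R}(M)‖ ≤ ( sup_{ν∈[0,1]} |S(ν)| ) ‖M‖, where ‖·‖ denotes the spectral norm; and (2) if inf_{ν∈[0,1]} S(ν) > 0 and M is Hermitian positive definite, then Ψ_{K,R}(M) is Hermitian positive definite. -/

import Mathlib

open MeasureTheory Matrix Complex
open scoped ComplexOrder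

/-- The spectral (operator) norm of a complex square matrix. -/
noncomputable def specNorm {n : ℕ} (A : Matrix (Fin n) (Fin n) ℂ) : ℝ :=
  ‖Matrix.toEuclideanCLM (𝕜 := ℂ) A‖

/-- The Fourier vector `d_R(ν) = (1, e^{2πiν}, …, e^{2πi(R−1)ν})ᵀ`. -/
noncomputable def dvec (R : ℕ) (ν : ℝ) : Fin R → ℂ :=
  fun j => Complex.exp (2 * (Real.pi : ℂ) * Complex.I * ((j : ℕ) : ℂ) * (ν : ℂ))

/-- The normalized Fourier vector `a_R(ν) = d_R(ν)/√R`. -/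
noncomputable def avec (R : ℕ) (ν : ℝ) : Fin R → ℂ :=
  ((1 / Real.sqrt R : ℝ) : ℂ) • dvec R ν

/-- Entrywise (Bochner) integral over `[0,1]` of a matrix-valued function. -/
noncomputable def mInt {m n : ℕ} (f : ℝ → Matrix (Fin m) (Fin n) ℂ) :
    Matrix (Fin m) (Fin n) ℂ :=
  Matrix.of fun i j => ∫ ν in Set.Icc (0 : ℝ) 1, f ν i j

/-- The Toeplitzification operator
`Ψ_{K,R}(M) = ∫₀¹ S(ν) (a_R(ν)ᴴ M a_R(ν)) d_K(ν) d_K(ν)ᴴ dν`. -/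
noncomputable def Psi (S : ℝ → ℝ) (K R : ℕ) (M : Matrix (Fin R) (Fin R) ℂ) :
    Matrix (Fin K) (Fin K) ℂ :=
  mInt fun ν =>
    ((S ν : ℂ) * (star (avec R ν) ⬝ᵥ M.mulVec (avec R ν))) •
      Matrix.vecMulVec (dvec K ν) (star (dvec K ν))

/-!
`Ψ_{K,R}(M)` is the Toeplitz matrix `T(w) = ∫₀¹ w d_K d_Kᴴ` of the symbol
`w(ν) = S(ν) a_R(ν)ᴴ M a_R(ν)`, so `⟪y, T(w) x⟫ = ∫₀¹ w ⟪y, d_K⟫ ⟪d_K, x⟫`. Orthonormality of the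
exponentials on `[0,1]` gives Parseval's identity `∫₀¹ |⟪d_K, x⟫|² = ‖x‖²`. For unit vectors `x, y`,
AM-GM then bounds `|⟪y, T(w) x⟫|` by `sup |w|`, and `⟪x, T(w) x⟫ = ∫₀¹ w |⟪d_K, x⟫|² ≥ (min w) ‖x‖²`
when `w > 0`. Finally `|a_Rᴴ M a_R| ≤ ‖M‖` because `‖a_R‖ = 1`, and `a_Rᴴ M a_R > 0` when `M` is
positive definite.
-/

open scoped InnerProductSpace ComplexConjugate Real
open Set

theorem integral_exp_two_pi_I_int_mul (n : ℤ) :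
    ∫ ν in Icc (0 : ℝ) 1, exp (2 * π * I * n * ν) = if n = 0 then 1 else 0 := by
  rw [integral_Icc_eq_integral_Ioc, ← intervalIntegral.integral_of_le zero_le_one]
  split_ifs with hn
  · simp [hn]
  have hc : 2 * π * I * n ≠ 0 := by simp [Real.pi_ne_zero, I_ne_zero, hn]
  have hperiod : exp (2 * π * I * n) = 1 := by
    rw [show 2 * π * I * n = n * (2 * π * I) by ring, exp_int_mul_two_pi_mul_I]
  rw [integral_exp_mul_complex hc]
  simp [hperiod]

theorem dvec_mul_conj_dvec (K : ℕ) (ν : ℝ) (i j : Fin K) :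
    dvec K ν i * conj (dvec K ν j) = exp (2 * π * I * ((i - j : ℤ) : ℂ) * ν) := by
  simp only [dvec, ← exp_conj, ← exp_add, map_mul, conj_I, conj_ofReal, map_ofNat, map_natCast]
  push_cast
  ring_nf

theorem integral_dvec_mul_conj_dvec (K : ℕ) (i j : Fin K) :
    ∫ ν in Icc (0 : ℝ) 1, dvec K ν i * conj (dvec K ν j) = if i = j then 1 else 0 := by
  simp_rw [dvec_mul_conj_dvec, integral_exp_two_pi_I_int_mul, sub_eq_zero, Int.ofNat_inj,
    Fin.val_inj]

theorem continuous_dvec (K : ℕ) : Continuous (dvec K) := by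
  unfold dvec
  fun_prop

/-- The `(i, j)` entry is the Fourier coefficient `ŵ(j - i)` of the symbol `w`. -/
noncomputable def toeplitz (K : ℕ) (w : ℝ → ℂ) : Matrix (Fin K) (Fin K) ℂ :=
  mInt fun ν => w ν • vecMulVec (dvec K ν) (star (dvec K ν))

theorem toeplitz_apply (K : ℕ) (w : ℝ → ℂ) (i j : Fin K) :
    toeplitz K w i j = ∫ ν in Icc (0 : ℝ) 1, w ν * (dvec K ν i * conj (dvec K ν j)) := rfl

theorem toeplitz_one (K : ℕ) : toeplitz K (fun _ => 1) = 1 := by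
  ext i j
  simp [toeplitz_apply, integral_dvec_mul_conj_dvec, Matrix.one_apply]

noncomputable def fourierVec (K : ℕ) (ν : ℝ) : EuclideanSpace ℂ (Fin K) :=
  WithLp.toLp 2 (dvec K ν)

theorem continuous_fourierVec (K : ℕ) : Continuous (fourierVec K) :=
  (PiLp.continuous_toLp 2 _).comp (continuous_dvec K)

theorem inner_toeplitz (K : ℕ) {w : ℝ → ℂ} (hw : ContinuousOn w (Icc 0 1))
    (x y : EuclideanSpace ℂ (Fin K)) :
    ⟪y, toEuclideanCLM (𝕜 := ℂ) (toeplitz K w) x⟫_ℂ =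
      ∫ ν in Icc (0 : ℝ) 1, w ν * (⟪y, fourierVec K ν⟫_ℂ * ⟪fourierVec K ν, x⟫_ℂ) := by
  have hint (i j : Fin K) : IntegrableOn
      (fun ν => conj (y i) * (w ν * (dvec K ν i * conj (dvec K ν j))) * x j) (Icc 0 1) := by
    refine ContinuousOn.integrableOn_compact isCompact_Icc ?_
    have := continuous_dvec K
    fun_prop
  have hpt (ν : ℝ) : w ν * (⟪y, fourierVec K ν⟫_ℂ * ⟪fourierVec K ν, x⟫_ℂ) =
      ∑ i, ∑ j, conj (y i) * (w ν * (dvec K ν i * conj (dvec K ν j))) * x j := by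
    simp only [PiLp.inner_apply, fourierVec, RCLike.inner_apply]
    rw [Finset.sum_mul_sum, Finset.mul_sum]
    refine Finset.sum_congr rfl fun i _ => ?_
    rw [Finset.mul_sum]
    refine Finset.sum_congr rfl fun j _ => ?_
    ring
  simp_rw [hpt]
  rw [integral_finsetSum _ fun i _ => integrable_finsetSum _ fun j _ => hint i j]
  simp_rw [integral_finsetSum _ fun j _ => hint _ j, integral_mul_const, integral_const_mul,
    ← toeplitz_apply]
  simp only [PiLp.inner_apply, RCLike.inner_apply, ofLp_toEuclideanCLM, mulVec, dotProduct,
    Finset.sum_mul]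
  refine Finset.sum_congr rfl fun i _ => Finset.sum_congr rfl fun j _ => ?_
  ring

theorem integral_inner_fourierVec_mul_inner (K : ℕ) (x y : EuclideanSpace ℂ (Fin K)) :
    ∫ ν in Icc (0 : ℝ) 1, ⟪y, fourierVec K ν⟫_ℂ * ⟪fourierVec K ν, x⟫_ℂ = ⟪y, x⟫_ℂ := by
  simpa [toeplitz_one] using (inner_toeplitz K (w := fun _ => 1) continuousOn_const x y).symm

theorem integral_norm_inner_fourierVec_sq (K : ℕ) (x : EuclideanSpace ℂ (Fin K)) :
    ∫ ν in Icc (0 : ℝ) 1, ‖⟪fourierVec K ν, x⟫_ℂ‖ ^ 2 = ‖x‖ ^ 2 := by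
  have hpt (ν : ℝ) : ⟪x, fourierVec K ν⟫_ℂ * ⟪fourierVec K ν, x⟫_ℂ =
      ((‖⟪fourierVec K ν, x⟫_ℂ‖ ^ 2 : ℝ) : ℂ) := by
    rw [← inner_conj_symm, conj_mul']
    push_cast
    rfl
  have h := integral_inner_fourierVec_mul_inner K x x
  simp_rw [hpt, inner_self_eq_norm_sq_to_K] at h
  exact_mod_cast integral_ofReal.symm.trans h

theorem continuous_norm_inner_fourierVec_sq (K : ℕ) (x : EuclideanSpace ℂ (Fin K)) :
    Continuous fun ν => ‖⟪fourierVec K ν, x⟫_ℂ‖ ^ 2 := by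
  have := continuous_fourierVec K
  fun_prop

theorem integrableOn_norm_inner_fourierVec_sq (K : ℕ) (x : EuclideanSpace ℂ (Fin K)) :
    IntegrableOn (fun ν => ‖⟪fourierVec K ν, x⟫_ℂ‖ ^ 2) (Icc 0 1) :=
  (continuous_norm_inner_fourierVec_sq K x).integrableOn_Icc

theorem norm_toeplitz_le (K : ℕ) {w : ℝ → ℂ} {C : ℝ} (hw : ContinuousOn w (Icc 0 1))
    (hC : ∀ ν ∈ Icc (0 : ℝ) 1, ‖w ν‖ ≤ C) : ‖toEuclideanCLM (𝕜 := ℂ) (toeplitz K w)‖ ≤ C := by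
  have hC0 : 0 ≤ C := (norm_nonneg _).trans (hC 0 (left_mem_Icc.2 zero_le_one))
  refine ContinuousLinearMap.opNorm_le_of_re_inner_le hC0 fun x y hx hy => ?_
  let q (z : EuclideanSpace ℂ (Fin K)) (ν : ℝ) := ‖⟪fourierVec K ν, z⟫_ℂ‖ ^ 2
  have hbound : ∀ ν ∈ Icc (0 : ℝ) 1,
      ‖w ν * (⟪y, fourierVec K ν⟫_ℂ * ⟪fourierVec K ν, x⟫_ℂ)‖ ≤ C * ((q y ν + q x ν) / 2) := by
    intro ν hν
    rw [norm_mul, norm_mul, norm_inner_symm]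
    have hamgm := two_mul_le_add_sq ‖⟪fourierVec K ν, y⟫_ℂ‖ ‖⟪fourierVec K ν, x⟫_ℂ‖
    exact mul_le_mul (hC ν hν) (by simp only [q]; linarith) (by positivity) hC0
  calc RCLike.re ⟪toEuclideanCLM (𝕜 := ℂ) (toeplitz K w) x, y⟫_ℂ
      ≤ ‖⟪y, toEuclideanCLM (𝕜 := ℂ) (toeplitz K w) x⟫_ℂ‖ :=
        (RCLike.re_le_norm _).trans (norm_inner_symm _ _).le
    _ ≤ ∫ ν in Icc (0 : ℝ) 1, C * ((q y ν + q x ν) / 2) := by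
      rw [inner_toeplitz K hw]
      refine norm_integral_le_of_norm_le ?_ (ae_restrict_of_forall_mem measurableSet_Icc hbound)
      exact (((integrableOn_norm_inner_fourierVec_sq K y).add
        (integrableOn_norm_inner_fourierVec_sq K x)).div_const 2).const_mul C
    _ = C := by
      rw [integral_const_mul, integral_div, integral_add (integrableOn_norm_inner_fourierVec_sq K y)
        (integrableOn_norm_inner_fourierVec_sq K x), integral_norm_inner_fourierVec_sq,
        integral_norm_inner_fourierVec_sq, hx, hy]
      ring

theorem toeplitz_posDef (K : ℕ) {w : ℝ → ℂ} (hw : ContinuousOn w (Icc 0 1))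
    (hpos : ∀ ν ∈ Icc (0 : ℝ) 1, 0 < w ν) : (toeplitz K w).PosDef := by
  have hreal : ∀ ν ∈ Icc (0 : ℝ) 1, w ν = (w ν).re := fun ν hν =>
    eq_re_of_ofReal_le (by exact_mod_cast (hpos ν hν).le)
  have hquad (x : EuclideanSpace ℂ (Fin K)) : ⟪x, toEuclideanCLM (𝕜 := ℂ) (toeplitz K w) x⟫_ℂ =
      ((∫ ν in Icc (0 : ℝ) 1, (w ν).re * ‖⟪fourierVec K ν, x⟫_ℂ‖ ^ 2 : ℝ) : ℂ) := by
    rw [inner_toeplitz K hw, ← integral_complex_ofReal]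
    refine setIntegral_congr_fun measurableSet_Icc fun ν hν => ?_
    rw [← inner_conj_symm x, conj_mul', hreal ν hν]
    push_cast
    rfl
  obtain ⟨ν₀, hν₀, hmin⟩ := isCompact_Icc.exists_isMinOn (nonempty_Icc.2 zero_le_one)
    (continuous_re.comp_continuousOn hw)
  have hlower (x : EuclideanSpace ℂ (Fin K)) :
      (w ν₀).re * ‖x‖ ^ 2 ≤ ∫ ν in Icc (0 : ℝ) 1, (w ν).re * ‖⟪fourierVec K ν, x⟫_ℂ‖ ^ 2 := by
    rw [← integral_norm_inner_fourierVec_sq, ← integral_const_mul]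
    refine setIntegral_mono_on ((integrableOn_norm_inner_fourierVec_sq K x).const_mul _) ?_
      measurableSet_Icc fun ν hν => mul_le_mul_of_nonneg_right (hmin hν) (sq_nonneg _)
    exact ((continuous_re.comp_continuousOn hw).mul
      (continuous_norm_inner_fourierVec_sq K x).continuousOn).integrableOn_compact isCompact_Icc
  have hherm : (toeplitz K w).IsHermitian := by
    rw [← isSymmetric_toEuclideanLin_iff, LinearMap.isSymmetric_iff_inner_map_self_real]
    intro x
    change conj ⟪toEuclideanCLM (𝕜 := ℂ) (toeplitz K w) x, x⟫_ℂ =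
      ⟪toEuclideanCLM (𝕜 := ℂ) (toeplitz K w) x, x⟫_ℂ
    rw [inner_conj_symm x, ← inner_conj_symm _ x, hquad, conj_ofReal]
  refine posDef_iff_dotProduct_mulVec.2 ⟨hherm, fun x hx => ?_⟩
  have hx' : 0 < ‖WithLp.toLp 2 x‖ := by simpa using hx
  rw [dotProduct_comm, ← EuclideanSpace.inner_toLp_toLp, ← toEuclideanCLM_toLp, hquad,
    zero_lt_real]
  exact (mul_pos (pos_iff.1 (hpos ν₀ hν₀)).1 (pow_pos hx' 2)).trans_le (hlower _)

theorem norm_toLp_avec {R : ℕ} (hR : 1 ≤ R) (ν : ℝ) : ‖WithLp.toLp 2 (avec R ν)‖ = 1 := by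
  have hentry (j : Fin R) : ‖avec R ν j‖ = 1 / √R := by
    rw [avec, Pi.smul_apply, smul_eq_mul, norm_mul, norm_real, dvec, norm_exp]
    simp
  have hR0 : (0 : ℝ) < R := by exact_mod_cast hR
  rw [EuclideanSpace.norm_eq]
  simp only [hentry, Finset.sum_const, Finset.card_univ, Fintype.card_fin, div_pow, one_pow,
    Real.sq_sqrt hR0.le, nsmul_eq_mul]
  rw [mul_one_div_cancel hR0.ne', Real.sqrt_one]

theorem avec_ne_zero {R : ℕ} (hR : 1 ≤ R) (ν : ℝ) : avec R ν ≠ 0 := fun h => by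
  simpa [h] using norm_toLp_avec hR ν

theorem continuous_star_avec_dotProduct_mulVec (R : ℕ) (M : Matrix (Fin R) (Fin R) ℂ) :
    Continuous fun ν => star (avec R ν) ⬝ᵥ M *ᵥ avec R ν := by
  have havec : Continuous (avec R) := (continuous_dvec R).const_smul ((1 / √R : ℝ) : ℂ)
  exact havec.star.dotProduct (continuous_const.matrix_mulVec havec)

theorem norm_star_avec_dotProduct_mulVec_le {R : ℕ} (hR : 1 ≤ R) (M : Matrix (Fin R) (Fin R) ℂ)
    (ν : ℝ) : ‖star (avec R ν) ⬝ᵥ M *ᵥ avec R ν‖ ≤ specNorm M := by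
  set a := WithLp.toLp 2 (avec R ν)
  set T := toEuclideanCLM (𝕜 := ℂ) M
  have hquad : star (avec R ν) ⬝ᵥ M *ᵥ avec R ν = ⟪a, T a⟫_ℂ := by
    rw [toEuclideanCLM_toLp, EuclideanSpace.inner_toLp_toLp, dotProduct_comm]
  calc ‖star (avec R ν) ⬝ᵥ M *ᵥ avec R ν‖ ≤ ‖a‖ * ‖T a‖ := hquad ▸ norm_inner_le_norm _ _
    _ ≤ ‖a‖ * (‖T‖ * ‖a‖) := by gcongr; exact T.le_opNorm a
    _ = specNorm M := by rw [norm_toLp_avec hR, one_mul, mul_one, specNorm]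

theorem Psi_eq_toeplitz (S : ℝ → ℝ) (K R : ℕ) (M : Matrix (Fin R) (Fin R) ℂ) :
    Psi S K R M = toeplitz K fun ν => S ν * (star (avec R ν) ⬝ᵥ M *ᵥ avec R ν) :=
  rfl

theorem psi_norm_and_posdef_general (S : ℝ → ℝ)
    (hS : ContinuousOn S (Set.Icc (0 : ℝ) 1))
    (K R : ℕ) (hR : 1 ≤ R) :
    (∀ M : Matrix (Fin R) (Fin R) ℂ,
        specNorm (Psi S K R M) ≤ (⨆ ν : Set.Icc (0 : ℝ) 1, |S (ν : ℝ)|) * specNorm M) ∧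
      ((0 < ⨅ ν : Set.Icc (0 : ℝ) 1, S (ν : ℝ)) →
        ∀ M : Matrix (Fin R) (Fin R) ℂ, M.PosDef → (Psi S K R M).PosDef) := by
  have hw (M : Matrix (Fin R) (Fin R) ℂ) :
      ContinuousOn (fun ν => S ν * (star (avec R ν) ⬝ᵥ M *ᵥ avec R ν)) (Icc 0 1) :=
    (continuous_ofReal.comp_continuousOn hS).mul
      (continuous_star_avec_dotProduct_mulVec R M).continuousOn
  have hsup : ∀ ν ∈ Icc (0 : ℝ) 1, |S ν| ≤ ⨆ ν : Icc (0 : ℝ) 1, |S ν| := fun ν hν =>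
    le_ciSup (f := fun ν : Icc (0 : ℝ) 1 => |S ν|)
      (by simpa [image_eq_range] using isCompact_Icc.bddAbove_image hS.abs) ⟨ν, hν⟩
  have hinf : ∀ ν ∈ Icc (0 : ℝ) 1, ⨅ ν : Icc (0 : ℝ) 1, S ν ≤ S ν := fun ν hν =>
    ciInf_le (f := fun ν : Icc (0 : ℝ) 1 => S ν)
      (by simpa [image_eq_range] using isCompact_Icc.bddBelow_image hS) ⟨ν, hν⟩
  refine ⟨fun M => ?_, fun hpos M hM => ?_⟩
  · rw [Psi_eq_toeplitz]
    refine norm_toeplitz_le K (hw M) fun ν hν => ?_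
    rw [norm_mul, norm_real, Real.norm_eq_abs]
    exact mul_le_mul (hsup ν hν) (norm_star_avec_dotProduct_mulVec_le hR M ν) (norm_nonneg _)
      ((abs_nonneg _).trans (hsup ν hν))
  · rw [Psi_eq_toeplitz]
    refine toeplitz_posDef K (hw M) fun ν hν =>
      mul_pos ?_ (hM.dotProduct_mulVec_pos (avec_ne_zero hR ν))
    exact zero_lt_real.2 (hpos.trans_le (hinf ν hν))

/-- norm bound and positivity preservation for the
Toeplitzification operator. -/
theorem psi_norm_and_posdef (S : ℝ → ℝ)
    (hS : ContinuousOn S (Set.Icc (0 : ℝ) 1))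
    (K R : ℕ) (hK : 1 ≤ K) (hR : 1 ≤ R) :
    (∀ M : Matrix (Fin R) (Fin R) ℂ,
        specNorm (Psi S K R M) ≤ (⨆ ν : Set.Icc (0 : ℝ) 1, |S (ν : ℝ)|) * specNorm M) ∧
      ((0 < ⨅ ν : Set.Icc (0 : ℝ) 1, S (ν : ℝ)) →
        ∀ M : Matrix (Fin R) (Fin R) ℂ, M.PosDef → (Psi S K R M).PosDef) :=
  psi_norm_and_posdef_general S hS K R hR
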